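/- arXiv:1902.09572 — 3 statements merged into one kernel-verified Lean document; each statement's English description precedes it below -/
import Mathlib

section
/- Let r, s > 0 with r² + s² = 1, and define f : ℂ → ℂ² by f(x + iy) = (r·e^{i(y − 2(r/s)x)}, s·e^{i(2y + (s/r)x)}). Then (i) f takes values in S³ = {(z,w) : |z|² + |w|² = 1}; (ii) f is invariant under translation by 2πi, i.e., f(z + 2πi) = f(z) for all z; and (iii) f is invariant under translation by 2π(rs + 2ir²)/(s² + 4r²), i.e., f(z + 2π(rs + 2ir²)/(s² + 4r²)) = f(z) for all z. -/
open Real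

noncomputable def homTorus12 (r s : ℝ) : ℂ → ℂ × ℂ := fun z =>
  ((r : ℂ) * Complex.exp (Complex.I * ((z.im - 2 * (r/s) * z.re : ℝ) : ℂ)),
   (s : ℂ) * Complex.exp (Complex.I * ((2 * z.im + (s/r) * z.re : ℝ) : ℂ)))

lemma exp_shift (a b : ℝ) (k : ℤ) (h : a = b + 2 * π * k) :
    Complex.exp (Complex.I * (a : ℂ)) = Complex.exp (Complex.I * (b : ℂ)) := by
  have : Complex.I * (a : ℂ) = Complex.I * (b : ℂ) + (k : ℂ) * (2 * π * Complex.I) := by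
    rw [h]; push_cast; ring
  rw [this, Complex.exp_add, Complex.exp_int_mul_two_pi_mul_I, mul_one]

theorem homogeneous_torus_12_equivariant (r s : ℝ) (hr : 0 < r) (hs : 0 < s)
    (hrs : r^2 + s^2 = 1) :
    (∀ z : ℂ, ‖(homTorus12 r s z).1‖^2 + ‖(homTorus12 r s z).2‖^2 = 1)
    ∧ (∀ z : ℂ, homTorus12 r s (z + 2 * π * Complex.I) = homTorus12 r s z)
    ∧ (∀ z : ℂ, homTorus12 r s
        (z + 2 * π * ((r*s : ℝ) + 2 * (r^2 : ℝ) * Complex.I) / ((s^2 + 4*r^2 : ℝ)))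
          = homTorus12 r s z) := by
  have hD : s^2 + 4*r^2 ≠ 0 := by positivity
  refine ⟨?_, ?_, ?_⟩
  · intro z
    simp only [homTorus12, norm_mul, Complex.norm_real, Complex.norm_exp,
      Complex.mul_re, Complex.I_re, Complex.I_im, Complex.ofReal_re, Complex.ofReal_im,
      Complex.norm_real]
    simp [abs_of_pos hr, abs_of_pos hs, hrs]
  · intro z
    simp only [homTorus12, Complex.add_re, Complex.add_im]
    have hre : (2 * (π:ℂ) * Complex.I).re = 0 := by simp
    have him : (2 * (π:ℂ) * Complex.I).im = 2 * π := by simp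
    rw [hre, him]
    refine Prod.ext ?_ ?_ <;> simp only
    · congr 1
      exact exp_shift _ _ 1 (by push_cast; ring)
    · congr 1
      exact exp_shift _ _ 2 (by push_cast; ring)
  · intro z
    have hD' : ((s^2 + 4*r^2 : ℝ) : ℂ) ≠ 0 := by exact_mod_cast hD
    have hw : (2 * (π:ℂ) * ((r*s : ℝ) + 2 * (r^2 : ℝ) * Complex.I) / ((s^2 + 4*r^2 : ℝ)))
        = ((2*π*r*s/(s^2+4*r^2) : ℝ) : ℂ) + ((4*π*r^2/(s^2+4*r^2) : ℝ) : ℂ) * Complex.I := by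
      push_cast
      field_simp
      ring
    simp only [homTorus12, hw, Complex.add_re, Complex.add_im, Complex.ofReal_re,
      Complex.ofReal_im, Complex.mul_re, Complex.mul_im, Complex.I_re, Complex.I_im,
      mul_zero, mul_one, zero_mul, sub_zero, add_zero, zero_add]
    refine Prod.ext ?_ ?_ <;> simp only
    · congr 1
      refine exp_shift _ _ 0 ?_
      show z.im + 4*π*r^2/(s^2+4*r^2) - 2*(r/s)*(z.re + 2*π*r*s/(s^2+4*r^2))
          = z.im - 2*(r/s)*z.re + 2*π*((0:ℤ):ℝ)
      push_cast
      field_simp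
      ring
    · congr 1
      refine exp_shift _ _ 1 ?_
      show 2*(z.im + 4*π*r^2/(s^2+4*r^2)) + (s/r)*(z.re + 2*π*r*s/(s^2+4*r^2))
          = 2*z.im + (s/r)*z.re + 2*π*((1:ℤ):ℝ)
      push_cast
      field_simp
      ring
end

section
/- For all positive integers k and l: 2(k² + l²)² − 6(k² + l²) − 20kl + 4 + 40kl/(k² + l²) ≥ 0, with equality if and only if (k, l) ∈ {(1,1), (1,2), (2,1)}. -/
/-!
Writing `s = k² + l²`, the expression equals `2 (s - 2) (s² - s - 10 k l) / s`. Since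
`10 k l ≤ 5 s`, the second factor is at least `s (s - 6)`, so the expression is positive as soon
as `s ≥ 7`; the only pairs of positive integers with `s < 7` are `(1,1)`, `(1,2)`, `(2,1)`,
where it vanishes.
-/

/-- The second variation of `W_α` at the Clifford torus on the mode `A_{kl}`, for `α̃ = 5/2`. -/
noncomputable def secondVariationCoeff (x y : ℝ) : ℝ :=
  2*(x^2+y^2)^2 - 6*(x^2+y^2) - 20*x*y + 4 + 40*x*y/(x^2+y^2)

lemma secondVariationCoeff_eq (x y : ℝ) (hs : x^2 + y^2 ≠ 0) :
    secondVariationCoeff x y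
      = 2 * (x^2 + y^2 - 2) * ((x^2 + y^2)^2 - (x^2 + y^2) - 10*x*y) / (x^2 + y^2) := by
  unfold secondVariationCoeff
  field_simp
  ring

lemma sq_add_sq_sq_sub_sq_add_sq_sub_ten_mul_pos {x y : ℝ} (hs : 7 ≤ x^2 + y^2) :
    0 < (x^2 + y^2)^2 - (x^2 + y^2) - 10*x*y := by
  nlinarith [two_mul_le_add_sq x y]

lemma secondVariationCoeff_pos {x y : ℝ} (hs : 7 ≤ x^2 + y^2) :
    0 < secondVariationCoeff x y := by
  rw [secondVariationCoeff_eq x y (by linarith)]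
  have := sq_add_sq_sq_sub_sq_add_sq_sub_ten_mul_pos hs
  have : 0 < x^2 + y^2 - 2 := by linarith
  positivity

lemma seven_le_sq_add_sq {k l : ℕ} (hk : 1 ≤ k) (hl : 1 ≤ l)
    (h : ¬((k, l) = (1, 1) ∨ (k, l) = (1, 2) ∨ (k, l) = (2, 1))) : 7 ≤ k^2 + l^2 := by
  by_contra! hs
  have hk2 : k ≤ 2 := by nlinarith
  have hl2 : l ≤ 2 := by nlinarith
  interval_cases k <;> interval_cases l <;> simp_all

theorem key_discrete_inequality (k l : ℕ) (hk : 1 ≤ k) (hl : 1 ≤ l) :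
    0 ≤ 2*((k:ℝ)^2+(l:ℝ)^2)^2 - 6*((k:ℝ)^2+(l:ℝ)^2) - 20*(k:ℝ)*(l:ℝ) + 4
        + 40*(k:ℝ)*(l:ℝ)/((k:ℝ)^2+(l:ℝ)^2)
    ∧ (2*((k:ℝ)^2+(l:ℝ)^2)^2 - 6*((k:ℝ)^2+(l:ℝ)^2) - 20*(k:ℝ)*(l:ℝ) + 4
        + 40*(k:ℝ)*(l:ℝ)/((k:ℝ)^2+(l:ℝ)^2) = 0
      ↔ (k, l) = (1, 1) ∨ (k, l) = (1, 2) ∨ (k, l) = (2, 1)) := by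
  change 0 ≤ secondVariationCoeff k l ∧ (secondVariationCoeff k l = 0 ↔ _)
  by_cases hkl : (k, l) = (1, 1) ∨ (k, l) = (1, 2) ∨ (k, l) = (2, 1)
  · have hzero : secondVariationCoeff k l = 0 := by
      rcases hkl with h | h | h <;> obtain ⟨rfl, rfl⟩ := Prod.mk.inj h <;>
        norm_num [secondVariationCoeff]
    exact ⟨hzero.ge, iff_of_true hzero hkl⟩
  · have hpos := secondVariationCoeff_pos (x := k) (y := l)
      (by exact_mod_cast seven_le_sq_add_sq hk hl hkl)
    exact ⟨hpos.le, iff_of_false hpos.ne' hkl⟩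
end

section
/- Define F(k, l) = 2(k²+l²)² − 6(k²+l²) + 4 and G(k, l) = 2kl − 4kl/(k²+l²) for positive integers k, l. Then the supremum of the set {α ∈ ℝ, α ≥ 0 : for all positive integers k, l, F(k,l) ≥ 4α·G(k,l)} equals 5/2, and this supremum is attained. -/
lemma big_case (x y : ℝ) (hx : 1 ≤ x) (hy : 1 ≤ y) (hs : 6 ≤ x^2 + y^2) :
    4 * (5/2) * (2*x*y - 4*x*y/(x^2+y^2)) ≤ 2*(x^2+y^2)^2 - 6*(x^2+y^2) + 4 := by
  have hp : (0:ℝ) < x^2 + y^2 := by nlinarith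
  have e : 2*x*y - 4*x*y/(x^2+y^2)
      = (2*x*y*(x^2+y^2) - 4*x*y)/(x^2+y^2) := by
    field_simp
  rw [e, ← mul_div_assoc, div_le_iff₀ hp]
  have h2 : 2*x*y ≤ x^2 + y^2 := by nlinarith [sq_nonneg (x - y)]
  nlinarith [mul_nonneg (sub_nonneg.2 h2) (by linarith : (0:ℝ) ≤ x^2+y^2-2),
    mul_nonneg (mul_nonneg hp.le (by linarith : (0:ℝ) ≤ x^2+y^2-2))
      (by linarith : (0:ℝ) ≤ x^2+y^2-6)]

theorem critical_multiplier_is_five_halves :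
    IsGreatest {α : ℝ | 0 ≤ α ∧ ∀ k l : ℕ, 1 ≤ k → 1 ≤ l →
        4 * α * (2*(k:ℝ)*(l:ℝ) - 4*(k:ℝ)*(l:ℝ)/((k:ℝ)^2+(l:ℝ)^2))
          ≤ 2*((k:ℝ)^2+(l:ℝ)^2)^2 - 6*((k:ℝ)^2+(l:ℝ)^2) + 4} (5/2) := by
  constructor
  · refine ⟨by norm_num, fun k l hk hl => ?_⟩
    -- small cases
    rcases eq_or_lt_of_le hk with hk1 | hk2
    · rcases eq_or_lt_of_le hl with hl1 | hl2
      · simp [← hk1, ← hl1]; norm_num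
      · rcases eq_or_lt_of_le (show 2 ≤ l from hl2) with hl2' | hl3
        · simp [← hk1, ← hl2']; norm_num
        · apply big_case <;> [skip; skip; skip] <;>
            first
            | (exact_mod_cast hk)
            | (exact_mod_cast hl)
            | (have : (3:ℝ) ≤ l := by exact_mod_cast hl3
               have : (1:ℝ) ≤ k := by exact_mod_cast hk
               nlinarith)
    · rcases eq_or_lt_of_le hl with hl1 | hl2
      · rcases eq_or_lt_of_le (show 2 ≤ k from hk2) with hk2' | hk3
        · simp [← hk2', ← hl1]; norm_num
        · apply big_case
          · exact_mod_cast hk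
          · exact_mod_cast hl
          · have : (3:ℝ) ≤ k := by exact_mod_cast hk3
            have : (1:ℝ) ≤ l := by exact_mod_cast hl
            nlinarith
      · apply big_case
        · exact_mod_cast hk
        · exact_mod_cast hl
        · have : (2:ℝ) ≤ k := by exact_mod_cast hk2
          have : (2:ℝ) ≤ l := by exact_mod_cast hl2
          nlinarith
  · rintro α ⟨hα0, hα⟩
    have h := hα 1 2 le_rfl (by norm_num)
    norm_num at h
    linarith
end
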